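/- For all integers 1 ≤ n ≤ m, c(n,m,n−1) equals: (1/4)·(n+m)!/((n−1)!(m−1)!)·(α₀+α₁) if n and m are both even; (1/4)·(n+m)!/(n!·m!)·((1+nm)·α₀ + (−1+nm)·α₁) if n and m are both odd; (1/4)·(n+m−1)!/((n−1)!·m!)·((−1+nm+m²)·α₀ + (1+nm+m²)·α₁) if n is even and m is odd; (1/4)·(n+m−1)!/(n!·(m−1)!)·((−1+nm+n²)·α₀ + (1+nm+n²)·α₁) if n is odd and m is even. -/

import Mathlib

/-!
With `i = n - 1` the recursion has the single correction term `k = n - 1`, and `c(n-1, m, n-1)`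
is the binomial coefficient `(m+n-1)! / (m! (n-1)!)`, its own correction sum being empty.
As `h₁` is the plain sum, this gives `c(n, m, n-1) = (n+m-1)! / (m! n!) · (Q(n+m) - Q(m) - Q(n))`
for the partial sums `Q(N) = q₀ + ⋯ + q_{N-1}`. Writing `⌈j/2⌉` and `⌊j/2⌋` through `(-1)^j`,
`Q(N) = ((N³ - N)/12 + ε N/4) α₀ + ((N³ - N)/12 - ε N/4) α₁` with `ε = (1 + (-1)^N)/2`,
and the four cases are the four parity patterns of `(n, m)` in this expression.
-/

open MvPolynomial Finset

/-- The equivariant Chevalley coefficient `q_j = ⌈j/2⌉²·α₀ + (⌊j/2⌋² + ⌊j/2⌋)·α₁`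
in `ℚ[α₀, α₁]`, with `α₀ = X 0` and `α₁ = X 1`. -/
noncomputable def q (j : ℕ) : MvPolynomial (Fin 2) ℚ :=
  C ((((j + 1) / 2 : ℕ) : ℚ) ^ 2) * X 0 +
    C ((((j / 2 : ℕ) : ℚ)) ^ 2 + (((j / 2 : ℕ) : ℚ))) * X 1

/-- `hsum d s x` is the complete homogeneous symmetric polynomial of degree `d` in the
variables `x i`, `i ∈ s`: the sum of all monomials of degree `d` in these variables
(with `hsum 0 s x = 1`). -/
def hsum {R : Type*} [CommSemiring R] (d : ℕ) (s : Finset ℕ) (x : ℕ → R) : R :=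
  ∑ μ ∈ s.sym d, ((μ : Multiset ℕ).map x).prod

open scoped Nat

section hsum

variable {R : Type*} [CommSemiring R] (s : Finset ℕ) (x : ℕ → R)

lemma hsum_zero : hsum 0 s x = 1 := by
  simp [hsum]
  rfl

lemma hsum_one : hsum 1 s x = ∑ j ∈ s, x j :=
  (sum_equiv Sym.oneEquiv (fun i => by rw [mem_sym_iff]; simp [Sym.mem_mk]) (by simp)).symm

end hsum

lemma sum_Icc_eq_sub_range {M : Type*} [AddCommGroup M] (f : ℕ → M) {a b : ℕ} (h : a ≤ b + 1) :
    ∑ j ∈ Icc a b, f j = ∑ j ∈ range (b + 1), f j - ∑ j ∈ range a, f j := by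
  rw [← Ico_add_one_right_eq_Icc, sum_Ico_eq_sub _ h]

lemma cast_factorial_div_factorial {K : Type*} [DivisionRing K] [CharZero K] {m n : ℕ}
    (h : m ≤ n) : ((n ! / m ! : ℕ) : K) = n ! / m ! :=
  Nat.cast_div_charZero (Nat.factorial_dvd_factorial h)

lemma cast_add_one_div_two (j : ℕ) : (((j + 1) / 2 : ℕ) : ℚ) = (2 * j + 1 - (-1) ^ j) / 4 := by
  rcases Nat.even_or_odd' j with ⟨t, rfl | rfl⟩
  · rw [show (2 * t + 1) / 2 = t by omega, pow_mul]; push_cast; ring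
  · rw [show (2 * t + 1 + 1) / 2 = t + 1 by omega, pow_succ, pow_mul]; push_cast; ring

lemma cast_div_two (j : ℕ) : ((j / 2 : ℕ) : ℚ) = (2 * j - 1 + (-1) ^ j) / 4 := by
  rcases Nat.even_or_odd' j with ⟨t, rfl | rfl⟩
  · rw [show 2 * t / 2 = t by omega, pow_mul]; push_cast; ring
  · rw [show (2 * t + 1) / 2 = t by omega, pow_succ, pow_mul]; push_cast; ring

lemma q_zero : q 0 = 0 := by simp [q]

lemma sum_range_q (N : ℕ) :
    ∑ j ∈ range N, q j =
      (((N : ℚ) ^ 3 - N) / 12 + (1 + (-1) ^ N) * N / 8) • X 0 +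
      (((N : ℚ) ^ 3 - N) / 12 - (1 + (-1) ^ N) * N / 8) • X 1 := by
  induction N with
  | zero => simp
  | succ N ih =>
    have hsq : ((-1 : ℚ) ^ N) ^ 2 = 1 := by rw [← pow_mul, mul_comm, pow_mul]; norm_num
    rw [sum_range_succ, ih, q, cast_add_one_div_two, cast_div_two, C_mul', C_mul', pow_succ]
    push_cast
    match_scalars <;> linear_combination (1 / 16) * hsq

section Recursion

variable {c : ℕ → ℕ → ℕ → MvPolynomial (Fin 2) ℚ}
    (hc1 : ∀ m : ℕ, 1 ≤ m → c 1 m 0 = q m)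
    (hc2 : ∀ m : ℕ, 1 ≤ m → c 1 m 1 = C ((m : ℚ) + 1))
    (hcrec : ∀ n m i : ℕ, 2 ≤ n → n ≤ m → i ≤ n →
      c n m i = C ((n.factorial : ℚ)⁻¹) *
        (C ((((m + i).factorial / m.factorial : ℕ) : ℚ)) * hsum (n - i) (Icc m (m + i)) q
          - ∑ k ∈ Icc (max i 1) (n - 1),
              C ((k.factorial : ℕ) : ℚ) * hsum (n - k) (Icc 1 k) q * c k m i))

include hc2 hcrec in
lemma c_self_eq {k m : ℕ} (hk : 1 ≤ k) (hkm : k ≤ m) :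
    c k m k = C (((m + k)! : ℚ) / (m ! * k !)) := by
  obtain rfl | hk2 := hk.eq_or_lt
  · rw [hc2 m hkm, Nat.factorial_succ, Nat.factorial_one]
    congr 1
    push_cast
    field_simp
  · rw [hcrec k m k hk2 hkm le_rfl, Nat.sub_self, hsum_zero, Icc_eq_empty (by omega), sum_empty,
      sub_zero, mul_one, ← map_mul, cast_factorial_div_factorial (by omega)]
    congr 1
    field_simp

include hc1 hc2 hcrec in
lemma c_pred_eq {n m : ℕ} (hn : 1 ≤ n) (hnm : n ≤ m) :
    c n m (n - 1) = C (((n + m - 1)! : ℚ) / (m ! * n !)) *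
      (∑ j ∈ range (n + m), q j - ∑ j ∈ range m, q j - ∑ j ∈ range n, q j) := by
  obtain rfl | hn2 := hn.eq_or_lt
  · rw [hc1 m (by omega), add_comm, sum_range_succ, Nat.add_sub_cancel, sum_range_one, q_zero]
    simp [Nat.factorial_ne_zero]
  obtain ⟨k, rfl⟩ : ∃ k, n = k + 1 := ⟨n - 1, by omega⟩
  rw [Nat.add_sub_cancel, hcrec (k + 1) m k hn2 hnm (by omega)]
  simp only [Nat.add_sub_cancel, Nat.add_sub_cancel_left, max_eq_left (by omega : 1 ≤ k),
    Icc_self, sum_singleton]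
  rw [hsum_one, hsum_one, c_self_eq hc2 hcrec (by omega) (by omega),
    sum_Icc_eq_sub_range _ (by omega), sum_Icc_eq_sub_range _ (by omega), sum_range_one, q_zero,
    sub_zero, cast_factorial_div_factorial (by omega), show k + 1 + m - 1 = m + k by omega,
    show m + k + 1 = k + 1 + m by omega]
  have hbinom : (C (((m + k)! : ℚ) / m !) : MvPolynomial (Fin 2) ℚ) =
      C (k ! : ℚ) * C (((m + k)! : ℚ) / (m ! * k !)) := by
    rw [← map_mul]
    congr 1
    field_simp
  have hcoef : (C (((m + k)! : ℚ) / (m ! * (k + 1)!)) : MvPolynomial (Fin 2) ℚ) =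
      C ((k + 1)! : ℚ)⁻¹ * C (((m + k)! : ℚ) / m !) := by
    rw [← map_mul]
    congr 1
    field_simp
  linear_combination C ((k + 1)! : ℚ)⁻¹ * (∑ j ∈ range (k + 1), q j) * hbinom -
    (∑ j ∈ range (k + 1 + m), q j - ∑ j ∈ range m, q j - ∑ j ∈ range (k + 1), q j) * hcoef

end Recursion

/-- Closed form for the equivariant cohomology structure constant `c^{n+m-1}_{n,m} = c(n,m,n−1)`,
where `c` is determined by `c(1,m,0) = q_m`, `c(1,m,1) = m+1`, and the recursion
`c(n,m,i) = (1/n!)·[((m+i)!/m!)·h_{n−i}(q_m,…,q_{m+i}) − Σ_{k=max(i,1)}^{n−1} k!·h_{n−k}(q₁,…,q_k)·c(k,m,i)]`. -/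
theorem stmt14 (c : ℕ → ℕ → ℕ → MvPolynomial (Fin 2) ℚ)
    (hc1 : ∀ m : ℕ, 1 ≤ m → c 1 m 0 = q m)
    (hc2 : ∀ m : ℕ, 1 ≤ m → c 1 m 1 = C ((m : ℚ) + 1))
    (hcrec : ∀ n m i : ℕ, 2 ≤ n → n ≤ m → i ≤ n →
      c n m i = C ((n.factorial : ℚ)⁻¹) *
        (C ((((m + i).factorial / m.factorial : ℕ) : ℚ)) * hsum (n - i) (Icc m (m + i)) q
          - ∑ k ∈ Icc (max i 1) (n - 1),
              C ((k.factorial : ℕ) : ℚ) * hsum (n - k) (Icc 1 k) q * c k m i))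
    (n m : ℕ) (hn : 1 ≤ n) (hnm : n ≤ m) :
    (Even n ∧ Even m → c n m (n - 1)
        = C ((1 / 4) * ((n + m).factorial : ℚ) / (((n - 1).factorial : ℚ) * ((m - 1).factorial : ℚ)))
            * (X 0 + X 1)) ∧
    (Odd n ∧ Odd m → c n m (n - 1)
        = C ((1 / 4) * ((n + m).factorial : ℚ) / ((n.factorial : ℚ) * (m.factorial : ℚ)))
            * (C (1 + (n : ℚ) * m) * X 0 + C ((n : ℚ) * m - 1) * X 1)) ∧
    (Even n ∧ Odd m → c n m (n - 1)
        = C ((1 / 4) * ((n + m - 1).factorial : ℚ) / (((n - 1).factorial : ℚ) * (m.factorial : ℚ)))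
            * (C ((n : ℚ) * m + (m : ℚ) ^ 2 - 1) * X 0 + C ((n : ℚ) * m + (m : ℚ) ^ 2 + 1) * X 1)) ∧
    (Odd n ∧ Even m → c n m (n - 1)
        = C ((1 / 4) * ((n + m - 1).factorial : ℚ) / ((n.factorial : ℚ) * ((m - 1).factorial : ℚ)))
            * (C ((n : ℚ) * m + (n : ℚ) ^ 2 - 1) * X 0 + C ((n : ℚ) * m + (n : ℚ) ^ 2 + 1) * X 1)) := by
  have hn0 : (n : ℚ) ≠ 0 := by norm_cast; omega
  have hm0 : (m : ℚ) ≠ 0 := by norm_cast; omega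
  have hn_fact : (n : ℚ) * (n - 1)! = n ! := by exact_mod_cast Nat.mul_factorial_pred (by omega)
  have hm_fact : (m : ℚ) * (m - 1)! = m ! := by exact_mod_cast Nat.mul_factorial_pred (by omega)
  have hnm_fact : ((n + m : ℕ) : ℚ) * (n + m - 1)! = (n + m)! := by
    exact_mod_cast Nat.mul_factorial_pred (by omega)
  rw [c_pred_eq hc1 hc2 hcrec hn hnm, sum_range_q, sum_range_q, sum_range_q,
    ← hn_fact, ← hm_fact, ← hnm_fact]
  simp only [C_mul', pow_add]
  push_cast
  refine ⟨?_, ?_, ?_, ?_⟩ <;> rintro ⟨hn_par, hm_par⟩ <;>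
    simp only [hn_par.neg_one_pow, hm_par.neg_one_pow] <;> match_scalars <;> field_simp <;> ring
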